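/- (Theorem 2) lim_{L→∞} J(θ_L^TD) = 0, where J(θ_L^TD) = ‖Δ_L^TD‖_1 is the ℓ1 norm of the expected multi-task TD update Δ_L^TD = E_{(P,r)∼μ}[ Σ_{ω=1}^n ρ_P(ω) Σ_{j=1}^n P_{ωj} ( r_ω + γ F_L^{(j)}(A^TD, 0) − F_L^{(ω)}(A^TD, 0) ) g_L(ω) ] of the looped Transformer evaluated at the TD parameters; i.e., the TD parameters are a global minimizer of the norm-of-expected-update pretraining loss in the limit of infinitely many layers. -/

import Mathlib

open Matrix Filter Topology

noncomputable section

/-- Index type for `2n` rows (two stacked copies of the feature dimension). -/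
abbrev TwoN (n : ℕ) := Fin n ⊕ Fin n
/-- Row index type for prompts: `2n + 1`. -/
abbrev RIdx (n : ℕ) := TwoN n ⊕ Unit
/-- Column index type for prompts: `n + 1` (context columns plus the query column). -/
abbrev CIdx (n : ℕ) := Fin n ⊕ Unit

/-- The mask `M = [[I_n, 0],[0, 0]]`. -/
def maskM (n : ℕ) : Matrix (CIdx n) (CIdx n) ℝ := Matrix.fromBlocks 1 0 0 0

/-- One linear attention layer `Z ↦ Z + P̃ Z M (Zᵀ Q̃ Z)`. -/
def attnLayer (n : ℕ) (Pm Qm : Matrix (RIdx n) (RIdx n) ℝ)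
    (Z : Matrix (RIdx n) (CIdx n) ℝ) : Matrix (RIdx n) (CIdx n) ℝ :=
  Z + Pm * Z * maskM n * (Zᵀ * Qm * Z)

/-- `P̃ = [[0, 0],[u, 1]]`. -/
def Pmat (n : ℕ) (u : Matrix Unit (TwoN n) ℝ) : Matrix (RIdx n) (RIdx n) ℝ :=
  Matrix.fromBlocks 0 0 u 1

/-- `Q̃ = [[A, 0],[0, 0]]`. -/
def Qmat (n : ℕ) (A : Matrix (TwoN n) (TwoN n) ℝ) : Matrix (RIdx n) (RIdx n) ℝ :=
  Matrix.fromBlocks A 0 0 0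

/-- `A^TD = [[-I, I],[0, 0]]`. -/
def Atd (n : ℕ) : Matrix (TwoN n) (TwoN n) ℝ := Matrix.fromBlocks (-1) 1 0 0

/-- A row-stochastic matrix. -/
def RowStochastic {n : ℕ} (P : Matrix (Fin n) (Fin n) ℝ) : Prop :=
  (∀ i k, 0 ≤ P i k) ∧ ∀ i, ∑ k, P i k = 1

/-- TD iterates `w_0 = 0`, `w_{l+1} = r + γ P w_l`. -/
def tdW {n : ℕ} (γ : ℝ) (P : Matrix (Fin n) (Fin n) ℝ) (r : Fin n → ℝ) : ℕ → Fin n → ℝ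
  | 0 => 0
  | l + 1 => r + γ • P.mulVec (tdW γ P r l)

/-- The value vector `v = (I - γ P)⁻¹ r`. -/
def valueV {n : ℕ} (γ : ℝ) (P : Matrix (Fin n) (Fin n) ℝ) (r : Fin n → ℝ) : Fin n → ℝ :=
  ((1 : Matrix (Fin n) (Fin n) ℝ) - γ • P)⁻¹.mulVec r

/-- The prompt `Z_0(j)`: the `i`-th column is `(e_i, γ Pᵀ e_i, r_i)` and the query
column is `(e_j, 0, 0)`. -/
def prompt {n : ℕ} (γ : ℝ) (P : Matrix (Fin n) (Fin n) ℝ) (r : Fin n → ℝ) (j : Fin n) :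
    Matrix (RIdx n) (CIdx n) ℝ := fun p q =>
  match p, q with
  | Sum.inl (Sum.inl k), Sum.inl i => if k = i then 1 else 0
  | Sum.inl (Sum.inr k), Sum.inl i => γ * P i k
  | Sum.inr _, Sum.inl i => r i
  | Sum.inl (Sum.inl k), Sum.inr _ => if k = j then 1 else 0
  | Sum.inl (Sum.inr _), Sum.inr _ => 0
  | Sum.inr _, Sum.inr _ => 0

/-- Embeddings `Z_l` of the looped transformer with shared parameters `(A, u)`,
starting from the prompt `Z_0(j)`. -/
def embed {n : ℕ} (γ : ℝ) (P : Matrix (Fin n) (Fin n) ℝ) (r : Fin n → ℝ) (j : Fin n)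
    (A : Matrix (TwoN n) (TwoN n) ℝ) (u : Matrix Unit (TwoN n) ℝ) :
    ℕ → Matrix (RIdx n) (CIdx n) ℝ
  | 0 => prompt γ P r j
  | l + 1 => attnLayer n (Pmat n u) (Qmat n A) (embed γ P r j A u l)

/-- Looped `L`-layer transformer output `F_L^{(j)}(A, u) = -(Z_L)_{2n+1, n+1}`. -/
def tfOut {n : ℕ} (γ : ℝ) (P : Matrix (Fin n) (Fin n) ℝ) (r : Fin n → ℝ) (j : Fin n)
    (A : Matrix (TwoN n) (TwoN n) ℝ) (u : Matrix Unit (TwoN n) ℝ) (L : ℕ) : ℝ :=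
  -(embed γ P r j A u L (Sum.inr ()) (Sum.inr ()))

/-- `TF_L(Z_0(j); θ_L^TD)`: the transformer output with the TD parameters. -/
def tfTD {n : ℕ} (γ : ℝ) (P : Matrix (Fin n) (Fin n) ℝ) (r : Fin n → ℝ) (j : Fin n) (L : ℕ) : ℝ :=
  tfOut γ P r j (Atd n) 0 L

/-- `X ∈ ℝ^{2n×n}`: the `i`-th column is `(e_i, γ Pᵀ e_i)`. -/
def Xmat {n : ℕ} (γ : ℝ) (P : Matrix (Fin n) (Fin n) ℝ) : Matrix (TwoN n) (Fin n) ℝ :=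
  fun p i => match p with
  | Sum.inl k => if k = i then 1 else 0
  | Sum.inr k => γ * P i k

/-- The query vector `x^q = (e_ω, 0) ∈ ℝ^{2n}`. -/
def xqv {n : ℕ} (ω : Fin n) : TwoN n → ℝ := fun p =>
  match p with
  | Sum.inl k => if k = ω then 1 else 0
  | Sum.inr _ => 0

/-- Operator norm induced by the ℓ1 vector norm: maximum absolute column sum. -/
def matL1 {m k : Type*} [Fintype m] [Fintype k] (B : Matrix m k ℝ) : ℝ :=
  ⨆ j, ∑ i, |B i j|

/-- `G_0^{(i)} = 0`, `G_{l+1}^{(i)} = X (r - w_l) (X e_i)ᵀ + γ Σ_j P_{ij} G_l^{(j)}`. -/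
def Gseq {n : ℕ} (γ : ℝ) (P : Matrix (Fin n) (Fin n) ℝ) (r : Fin n → ℝ) :
    ℕ → Fin n → Matrix (TwoN n) (TwoN n) ℝ
  | 0 => fun _ => 0
  | l + 1 => fun i =>
      Matrix.vecMulVec ((Xmat γ P).mulVec (r - tdW γ P r l)) ((Xmat γ P).mulVec (Pi.single i 1))
        + γ • ∑ j, P i j • Gseq γ P r l j

/-- `H_0 = 0`, `H_{l+1} = H_l + X (r - w_l) (x^q)ᵀ - G_l^{(ω)}`. -/
def Hseq {n : ℕ} (γ : ℝ) (P : Matrix (Fin n) (Fin n) ℝ) (r : Fin n → ℝ) (ω : Fin n) :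
    ℕ → Matrix (TwoN n) (TwoN n) ℝ
  | 0 => 0
  | l + 1 => Hseq γ P r ω l
      + Matrix.vecMulVec ((Xmat γ P).mulVec (r - tdW γ P r l)) (xqv ω)
      - Gseq γ P r l ω

/-- `U_0 = 0`, `U_{l+1} = X Xᵀ A^TD X + γ U_l Pᵀ`. -/
def Useq {n : ℕ} (γ : ℝ) (P : Matrix (Fin n) (Fin n) ℝ) : ℕ → Matrix (TwoN n) (Fin n) ℝ
  | 0 => 0
  | l + 1 => Xmat γ P * (Xmat γ P)ᵀ * Atd n * Xmat γ P + γ • (Useq γ P l * Pᵀ)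

/-- `h_0 = 0`, `h_{l+1} = h_l + X Xᵀ A^TD x^q + U_l Xᵀ A^TD x^q`. -/
def hseq {n : ℕ} (γ : ℝ) (P : Matrix (Fin n) (Fin n) ℝ) (ω : Fin n) : ℕ → TwoN n → ℝ
  | 0 => 0
  | l + 1 => hseq γ P ω l
      + (Xmat γ P * (Xmat γ P)ᵀ * Atd n).mulVec (xqv ω)
      + (Useq γ P l * (Xmat γ P)ᵀ * Atd n).mulVec (xqv ω)

/-- `g_L(j)`: the vector of all partial derivatives of `F_L^{(j)}` with respect to the
entries of `A` and of `u`, evaluated at the TD parameters `(A^TD, 0)`. -/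
def gvec {n : ℕ} (γ : ℝ) (P : Matrix (Fin n) (Fin n) ℝ) (r : Fin n → ℝ) (L : ℕ) (j : Fin n) :
    (TwoN n × TwoN n) ⊕ TwoN n → ℝ
  | Sum.inl ab => deriv (fun t : ℝ =>
      tfOut γ P r j (Atd n + t • Matrix.single ab.1 ab.2 1) 0 L) 0
  | Sum.inr k => deriv (fun t : ℝ =>
      tfOut γ P r j (Atd n) (t • Matrix.single () k 1) L) 0


/-- The product σ-algebra on matrices, via the identification with the Pi type. -/
instance matrixMeasurableSpace {m k α : Type*} [MeasurableSpace α] :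
    MeasurableSpace (Matrix m k α) :=
  inferInstanceAs (MeasurableSpace (m → k → α))

/-!
At the TD parameters every layer leaves the first `2n` rows of the prompt unchanged and updates
its last row `(c, s)` affinely: `c ↦ γ P c` and `s ↦ s - c_j`. Hence `c_l = (γ P)^l r` and
`-s_L = w_L(j)` is the `L`-th TD iterate, so the TD error
`∑_j P_{ωj} (r_ω + γ w_L(j) - w_L(ω)) = ((γ P)^L r)_ω` is at most `γ^L R`.
Differentiating the affine recursion along a direction of `(A, u)` gives a tangent recursion whose
context part is again contracted by `γ P` and stays bounded, while its query entry grows at most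
linearly; so `‖g_L‖ = O(L)`, and the update is `O(L γ^L)` uniformly in `(P, r)`, hence so is
its expectation.
-/

def affineIter {ι α : Type*} [Fintype ι] [NonUnitalNonAssocSemiring α]
    (w : ι → α) (B : Matrix ι ι α) (y₀ : ι → α) : ℕ → ι → α
  | 0 => y₀
  | l + 1 => affineIter w B y₀ l + (w + affineIter w B y₀ l) ᵥ* B

def tangentIter {ι α : Type*} [Fintype ι] [NonUnitalNonAssocSemiring α]
    (w₁ : ι → α) (B₀ B₁ : Matrix ι ι α) (y₀ : ι → α) : ℕ → ι → α
  | 0 => 0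
  | l + 1 => tangentIter w₁ B₀ B₁ y₀ l + (w₁ + tangentIter w₁ B₀ B₁ y₀ l) ᵥ* B₀
      + affineIter 0 B₀ y₀ l ᵥ* B₁

section Derivative

variable {𝕜 ι : Type*} [NontriviallyNormedField 𝕜] [Fintype ι]

lemma HasDerivAt.vecMul_add_smul {x : 𝕜 → ι → 𝕜} {x' : ι → 𝕜} {t : 𝕜}
    (hx : HasDerivAt x x' t) (B₀ B₁ : Matrix ι ι 𝕜) :
    HasDerivAt (fun s => x s ᵥ* (B₀ + s • B₁)) (x' ᵥ* (B₀ + t • B₁) + x t ᵥ* B₁) t := by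
  rw [hasDerivAt_pi] at hx ⊢
  intro k
  simp only [vecMul, dotProduct, Matrix.add_apply, Matrix.smul_apply, smul_eq_mul, Pi.add_apply,
    ← Finset.sum_add_distrib]
  exact HasDerivAt.fun_sum fun i _ => by
    simpa using (hx i).fun_mul (((hasDerivAt_id t).mul_const (B₁ i k)).const_add (B₀ i k))

lemma hasDerivAt_affineIter (w₁ : ι → 𝕜) (B₀ B₁ : Matrix ι ι 𝕜) (y₀ : ι → 𝕜) (l : ℕ) :
    HasDerivAt (fun t : 𝕜 => affineIter (t • w₁) (B₀ + t • B₁) y₀ l)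
      (tangentIter w₁ B₀ B₁ y₀ l) 0 := by
  induction l with
  | zero => exact hasDerivAt_const _ _
  | succ l ih =>
    have h :=
      ih.fun_add ((((hasDerivAt_id (0 : 𝕜)).smul_const w₁).fun_add ih).vecMul_add_smul B₀ B₁)
    refine h.congr_deriv ?_
    simp [tangentIter, add_assoc]

end Derivative

lemma norm_comp_inl_le {α β E : Type*} [Fintype α] [Fintype β] [SeminormedAddCommGroup E]
    (x : α ⊕ β → E) : ‖x ∘ Sum.inl‖ ≤ ‖x‖ :=
  (pi_norm_le_iff_of_nonneg (norm_nonneg x)).2 fun i => norm_le_pi_norm x (Sum.inl i)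

lemma norm_vecMul_le_of_abs_le_one {ι κ : Type*} [Fintype ι] [Fintype κ] {T : Matrix ι κ ℝ}
    (hT : ∀ p q, |T p q| ≤ 1) (v : ι → ℝ) : ‖v ᵥ* T‖ ≤ Fintype.card ι * ‖v‖ := by
  refine (pi_norm_le_iff_of_nonneg (by positivity)).2 fun q => ?_
  calc ‖(v ᵥ* T) q‖ ≤ ∑ p, ‖v p * T p q‖ := norm_sum_le _ _
    _ ≤ ∑ _p : ι, ‖v‖ := by
      gcongr with p
      rw [norm_mul, Real.norm_eq_abs (T p q)]
      exact mul_le_of_le_one_right (norm_nonneg _) (hT p q) |>.trans (norm_le_pi_norm v p)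
    _ = Fintype.card ι * ‖v‖ := by simp

lemma norm_mulVec_le_of_mem_rowStochastic {ι : Type*} [Fintype ι] [DecidableEq ι]
    {M : Matrix ι ι ℝ} (hM : M ∈ rowStochastic ℝ ι) (x : ι → ℝ) : ‖M *ᵥ x‖ ≤ ‖x‖ := by
  refine (pi_norm_le_iff_of_nonneg (norm_nonneg x)).2 fun i => ?_
  calc ‖(M *ᵥ x) i‖ ≤ ∑ k, ‖M i k * x k‖ := norm_sum_le _ _
    _ ≤ ∑ k, M i k * ‖x‖ := by
      gcongr with k
      rw [norm_mul, Real.norm_of_nonneg (nonneg_of_mem_rowStochastic hM)]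
      exact mul_le_mul_of_nonneg_left (norm_le_pi_norm x k) (nonneg_of_mem_rowStochastic hM)
    _ = ‖x‖ := by rw [← Finset.sum_mul, sum_row_of_mem_rowStochastic hM, one_mul]

lemma norm_smul_pow_mulVec_le_of_mem_rowStochastic {ι : Type*} [Fintype ι] [DecidableEq ι]
    {M : Matrix ι ι ℝ} (hM : M ∈ rowStochastic ℝ ι) {γ : ℝ} (hγ : 0 ≤ γ) (l : ℕ)
    (x : ι → ℝ) : ‖(γ • M) ^ l *ᵥ x‖ ≤ γ ^ l * ‖x‖ := by
  induction l with
  | zero => simp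
  | succ l ih =>
    rw [pow_succ', ← mulVec_mulVec, smul_mulVec, norm_smul, Real.norm_of_nonneg hγ, pow_succ',
      mul_assoc]
    exact mul_le_mul_of_nonneg_left ((norm_mulVec_le_of_mem_rowStochastic hM _).trans ih) hγ

lemma tendsto_sum_abs_integral_of_ae_norm_le {Ω ι : Type*} [MeasurableSpace Ω] [Fintype ι]
    {μ : MeasureTheory.Measure Ω} [MeasureTheory.IsProbabilityMeasure μ] {f : ℕ → Ω → ι → ℝ}
    {b : ℕ → ℝ} (hf : ∀ L, ∀ᵐ x ∂μ, ‖f L x‖ ≤ b L) (hb : Tendsto b atTop (𝓝 0)) :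
    Tendsto (fun L => ∑ i, |(∫ x, f L x ∂μ) i|) atTop (𝓝 0) := by
  have hle : ∀ L, ∑ i, |(∫ x, f L x ∂μ) i| ≤ Fintype.card ι * b L := fun L => by
    have h := MeasureTheory.norm_integral_le_of_norm_le_const (hf L)
    rw [MeasureTheory.probReal_univ, mul_one] at h
    calc _ ≤ ∑ _i : ι, b L := Finset.sum_le_sum fun i _ => (norm_le_pi_norm _ i).trans h
      _ = _ := by simp
  exact squeeze_zero (fun L => by positivity) hle (by simpa using hb.const_mul (Fintype.card ι : ℝ))

section Embedding

variable {n : ℕ} (γ : ℝ) (P : Matrix (Fin n) (Fin n) ℝ) (r : Fin n → ℝ) (j : Fin n)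

def featureMat : Matrix (TwoN n) (CIdx n) ℝ :=
  fromBlocks 1 (replicateCol Unit (Pi.single j 1)) (γ • Pᵀ) 0

lemma prompt_eq_fromRows :
    prompt γ P r j = fromRows (featureMat γ P j) (replicateRow Unit (Sum.elim r 0)) := by
  ext ((k | k) | _) (i | _) <;>
    simp [prompt, featureMat, one_apply, Pi.single_apply, eq_comm]

lemma attnLayer_fromRows (A : Matrix (TwoN n) (TwoN n) ℝ) (u : Matrix Unit (TwoN n) ℝ)
    (F : Matrix (TwoN n) (CIdx n) ℝ) (y : CIdx n → ℝ) :
    attnLayer n (Pmat n u) (Qmat n A) (fromRows F (replicateRow Unit y)) =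
      fromRows F (replicateRow Unit (y + (u () ᵥ* F + y) ᵥ* (maskM n * (Fᵀ * A * F)))) := by
  rw [attnLayer, Pmat, Qmat, transpose_fromRows, fromBlocks_mul_fromRows,
    fromCols_mul_fromBlocks, fromCols_mul_fromRows]
  ext (_ | _) _
  · simp
  · simp [Matrix.mul_assoc]; rfl

lemma embed_eq_fromRows (A : Matrix (TwoN n) (TwoN n) ℝ) (u : Matrix Unit (TwoN n) ℝ) (l : ℕ) :
    embed γ P r j A u l = fromRows (featureMat γ P j) (replicateRow Unit
      (affineIter (u () ᵥ* featureMat γ P j)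
        (maskM n * ((featureMat γ P j)ᵀ * A * featureMat γ P j)) (Sum.elim r 0) l)) := by
  induction l with
  | zero => exact prompt_eq_fromRows γ P r j
  | succ l ih => rw [embed, ih, attnLayer_fromRows, affineIter]

lemma tfOut_eq_affineIter (A : Matrix (TwoN n) (TwoN n) ℝ) (u : Matrix Unit (TwoN n) ℝ) (L : ℕ) :
    tfOut γ P r j A u L = -affineIter (u () ᵥ* featureMat γ P j)
      (maskM n * ((featureMat γ P j)ᵀ * A * featureMat γ P j)) (Sum.elim r 0) L (Sum.inr ()) := by
  rw [tfOut, embed_eq_fromRows]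
  rfl

def tdKernel : Matrix (CIdx n) (CIdx n) ℝ :=
  fromBlocks (γ • Pᵀ - 1) (-replicateCol Unit (Pi.single j 1)) 0 0

lemma maskM_mul_featureMat_Atd :
    maskM n * ((featureMat γ P j)ᵀ * Atd n * featureMat γ P j) = tdKernel γ P j := by
  simp [maskM, featureMat, Atd, tdKernel, fromBlocks_transpose, fromBlocks_multiply,
    sub_eq_neg_add]

lemma add_vecMul_tdKernel (v x : CIdx n → ℝ) :
    x + (v + x) ᵥ* tdKernel γ P j =
      Sum.elim (γ • P *ᵥ (v ∘ Sum.inl + x ∘ Sum.inl) - v ∘ Sum.inl)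
        (fun _ => x (Sum.inr ()) - (v (Sum.inl j) + x (Sum.inl j))) := by
  ext (i | _)
  · simp [tdKernel, vecMul_fromBlocks, vecMul_sub, vecMul_smul, vecMul_transpose, Pi.add_comp]
    ring
  · simp [tdKernel, vecMul_fromBlocks, vecMul, dotProduct, Pi.single_apply]
    ring

lemma sumElim_vecMul_maskM_mul (c : Fin n → ℝ) (s : Unit → ℝ)
    (T : Matrix (CIdx n) (CIdx n) ℝ) : Sum.elim c s ᵥ* (maskM n * T) = c ᵥ* T.toRows₁ := by
  rw [← fromRows_toRows T, maskM, fromBlocks_mul_fromRows, sumElim_vecMul_fromRows]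
  simp

lemma tdW_eq_sum (l : ℕ) : tdW γ P r l = ∑ k ∈ Finset.range l, (γ • P) ^ k *ᵥ r := by
  induction l with
  | zero => rfl
  | succ l ih =>
    rw [tdW, ih, Finset.sum_range_succ', mulVec_sum, Finset.smul_sum, add_comm]
    simp [pow_succ', smul_mulVec, mulVec_mulVec]

lemma tdW_succ_sub (l : ℕ) : tdW γ P r (l + 1) - tdW γ P r l = (γ • P) ^ l *ᵥ r := by
  rw [tdW_eq_sum, tdW_eq_sum, Finset.sum_range_succ, add_sub_cancel_left]

lemma affineIter_tdKernel (l : ℕ) :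
    affineIter 0 (tdKernel γ P j) (Sum.elim r 0) l =
      Sum.elim ((γ • P) ^ l *ᵥ r) (fun _ => -tdW γ P r l j) := by
  induction l with
  | zero => ext (_ | _) <;> simp [affineIter, tdW]
  | succ l ih =>
    rw [affineIter, ih, add_vecMul_tdKernel]
    ext (_ | _)
    · simp [pow_succ', smul_mulVec, mulVec_mulVec]
    · have h := congrFun (tdW_succ_sub γ P r l) j
      simp only [Pi.sub_apply] at h
      simp
      linarith

lemma tfTD_eq_tdW (L : ℕ) : tfTD γ P r j L = tdW γ P r L j := by
  have hu : (0 : Matrix Unit (TwoN n) ℝ) () ᵥ* featureMat γ P j = 0 := zero_vecMul _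
  simp [tfTD, tfOut_eq_affineIter, maskM_mul_featureMat_Atd, hu, affineIter_tdKernel]

lemma sum_mul_tdError_eq (hP : ∀ i, ∑ k, P i k = 1) (L : ℕ) (ω : Fin n) :
    ∑ j, P ω j * (r ω + γ * tdW γ P r L j - tdW γ P r L ω) = ((γ • P) ^ L *ᵥ r) ω := by
  have hPw : ∑ j, P ω j * (γ * tdW γ P r L j) = γ * (P *ᵥ tdW γ P r L) ω := by
    simp only [mulVec, dotProduct, Finset.mul_sum]
    exact Finset.sum_congr rfl fun _ _ => by ring
  rw [← tdW_succ_sub, tdW]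
  simp only [mul_sub, mul_add, Finset.sum_sub_distrib, Finset.sum_add_distrib, ← Finset.sum_mul,
    hP, hPw, Pi.sub_apply, Pi.add_apply, Pi.smul_apply, smul_eq_mul]
  ring

lemma hasDerivAt_tfOut_Atd_add (E : Matrix (TwoN n) (TwoN n) ℝ) (e : Matrix Unit (TwoN n) ℝ)
    (L : ℕ) :
    HasDerivAt (fun t : ℝ => tfOut γ P r j (Atd n + t • E) (t • e) L)
      (-tangentIter (e () ᵥ* featureMat γ P j) (tdKernel γ P j)
        (maskM n * ((featureMat γ P j)ᵀ * E * featureMat γ P j)) (Sum.elim r 0) L (Sum.inr ()))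
      0 := by
  set F := featureMat γ P j
  have hfun : (fun t : ℝ => tfOut γ P r j (Atd n + t • E) (t • e) L) = fun t =>
      -affineIter (t • (e () ᵥ* F)) (tdKernel γ P j + t • (maskM n * (Fᵀ * E * F)))
        (Sum.elim r 0) L (Sum.inr ()) := by
    funext t
    rw [tfOut_eq_affineIter, ← maskM_mul_featureMat_Atd]
    simp only [Matrix.mul_add, Matrix.add_mul, Matrix.mul_smul, Matrix.smul_mul]
    rw [show (t • e) () = t • e () from rfl, smul_vecMul]
  rw [hfun]
  exact (hasDerivAt_pi.1 (hasDerivAt_affineIter (e () ᵥ* F) (tdKernel γ P j)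
    (maskM n * (Fᵀ * E * F)) (Sum.elim r 0) L) (Sum.inr ())).neg

end Embedding

lemma RowStochastic.mem_rowStochastic {n : ℕ} {P : Matrix (Fin n) (Fin n) ℝ}
    (hP : RowStochastic P) : P ∈ rowStochastic ℝ (Fin n) :=
  mem_rowStochastic_iff_sum.2 hP

lemma RowStochastic.abs_featureMat_le_one {n : ℕ} {γ : ℝ} {P : Matrix (Fin n) (Fin n) ℝ}
    (hP : RowStochastic P) (hγ0 : 0 ≤ γ) (hγ1 : γ ≤ 1) (j : Fin n) (p : TwoN n) (q : CIdx n) :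
    |featureMat γ P j p q| ≤ 1 := by
  have hP' := hP.mem_rowStochastic
  rcases p with k | k <;> rcases q with i | _
  · simp [featureMat, one_apply]; split_ifs <;> simp
  · simp [featureMat, Pi.single_apply]; split_ifs <;> simp
  · simp only [featureMat, fromBlocks_apply₂₁, Matrix.smul_apply, transpose_apply, smul_eq_mul]
    rw [abs_of_nonneg (mul_nonneg hγ0 (nonneg_of_mem_rowStochastic hP'))]
    exact mul_le_one₀ hγ1 (nonneg_of_mem_rowStochastic hP') (le_one_of_mem_rowStochastic hP')
  · simp [featureMat]

section TDTangent

variable {n : ℕ} {γ : ℝ} {P : Matrix (Fin n) (Fin n) ℝ} {j : Fin n} {w₁ y₀ : CIdx n → ℝ}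
  {B₁ : Matrix (CIdx n) (CIdx n) ℝ} {β : ℝ}

lemma norm_tangentIter_tdKernel_inl_le (hP : RowStochastic P) (hγ0 : 0 ≤ γ) (hγ1 : γ < 1)
    (hw : ‖w₁‖ ≤ 1) (hf : ∀ l, ‖affineIter 0 (tdKernel γ P j) y₀ l ᵥ* B₁‖ ≤ β) (l : ℕ) :
    ‖tangentIter w₁ (tdKernel γ P j) B₁ y₀ l ∘ Sum.inl‖ ≤ (2 + β) / (1 - γ) := by
  have hβ : 0 ≤ β := (norm_nonneg _).trans (hf 0)
  have hγ : 0 < 1 - γ := sub_pos.2 hγ1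
  have hM : (1 - γ) * ((2 + β) / (1 - γ)) = 2 + β := mul_div_cancel₀ _ hγ.ne'
  have hw' : ‖w₁ ∘ Sum.inl‖ ≤ 1 := (norm_comp_inl_le w₁).trans hw
  induction l with
  | zero => simp [tangentIter]; positivity
  | succ l ih =>
    set d := tangentIter w₁ (tdKernel γ P j) B₁ y₀ l
    have hstep : tangentIter w₁ (tdKernel γ P j) B₁ y₀ (l + 1) ∘ Sum.inl =
        γ • P *ᵥ (w₁ ∘ Sum.inl + d ∘ Sum.inl) - w₁ ∘ Sum.inl
          + (affineIter 0 (tdKernel γ P j) y₀ l ᵥ* B₁) ∘ Sum.inl := by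
      rw [tangentIter, Pi.add_comp, add_vecMul_tdKernel]
      rfl
    calc ‖tangentIter w₁ (tdKernel γ P j) B₁ y₀ (l + 1) ∘ Sum.inl‖
        ≤ γ * (‖w₁ ∘ Sum.inl‖ + ‖d ∘ Sum.inl‖) + ‖w₁ ∘ Sum.inl‖ + β := by
          rw [hstep]
          refine (norm_add_le _ _).trans (add_le_add ((norm_sub_le _ _).trans ?_)
            ((norm_comp_inl_le _).trans (hf l)))
          rw [norm_smul, Real.norm_of_nonneg hγ0]
          gcongr
          exact (norm_mulVec_le_of_mem_rowStochastic hP.mem_rowStochastic _).trans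
            (norm_add_le _ _)
      _ ≤ γ * (1 + (2 + β) / (1 - γ)) + 1 + β := by gcongr
      _ = (2 + β) / (1 - γ) - (1 - γ) := by linarith
      _ ≤ (2 + β) / (1 - γ) := by linarith

lemma abs_tangentIter_tdKernel_inr_le (hP : RowStochastic P) (hγ0 : 0 ≤ γ) (hγ1 : γ < 1)
    (hw : ‖w₁‖ ≤ 1) (hf : ∀ l, ‖affineIter 0 (tdKernel γ P j) y₀ l ᵥ* B₁‖ ≤ β) (l : ℕ) :
    |tangentIter w₁ (tdKernel γ P j) B₁ y₀ l (Sum.inr ())|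
      ≤ l * (1 + (2 + β) / (1 - γ) + β) := by
  induction l with
  | zero => simp [tangentIter]
  | succ l ih =>
    set d := tangentIter w₁ (tdKernel γ P j) B₁ y₀ l
    have hstep : tangentIter w₁ (tdKernel γ P j) B₁ y₀ (l + 1) (Sum.inr ()) =
        d (Sum.inr ()) - (w₁ (Sum.inl j) + d (Sum.inl j))
          + (affineIter 0 (tdKernel γ P j) y₀ l ᵥ* B₁) (Sum.inr ()) := by
      rw [tangentIter, Pi.add_apply, add_vecMul_tdKernel]
      rfl
    have hdj : |d (Sum.inl j)| ≤ (2 + β) / (1 - γ) :=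
      (norm_le_pi_norm (d ∘ Sum.inl) j).trans
        (norm_tangentIter_tdKernel_inl_le hP hγ0 hγ1 hw hf l)
    have hwd : |w₁ (Sum.inl j) + d (Sum.inl j)| ≤ 1 + (2 + β) / (1 - γ) :=
      (abs_add_le _ _).trans (add_le_add ((norm_le_pi_norm w₁ _).trans hw) hdj)
    have hfj : |(affineIter 0 (tdKernel γ P j) y₀ l ᵥ* B₁) (Sum.inr ())| ≤ β :=
      (norm_le_pi_norm _ _).trans (hf l)
    rw [hstep]
    calc _ ≤ |d (Sum.inr ())| + |w₁ (Sum.inl j) + d (Sum.inl j)|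
          + |(affineIter 0 (tdKernel γ P j) y₀ l ᵥ* B₁) (Sum.inr ())| :=
          (abs_add_le _ _).trans (add_le_add (abs_sub _ _) le_rfl)
      _ ≤ (l + 1 : ℕ) * (1 + (2 + β) / (1 - γ) + β) := by push_cast; linarith

end TDTangent

lemma norm_affineIter_tdKernel_vecMul_maskM_mul_le {n : ℕ} {γ : ℝ}
    {P : Matrix (Fin n) (Fin n) ℝ} (hP : RowStochastic P) (hγ0 : 0 ≤ γ) (hγ1 : γ ≤ 1)
    (r : Fin n → ℝ) (j : Fin n) {T : Matrix (CIdx n) (CIdx n) ℝ} (hT : ∀ p q, |T p q| ≤ 1)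
    (l : ℕ) :
    ‖affineIter 0 (tdKernel γ P j) (Sum.elim r 0) l ᵥ* (maskM n * T)‖ ≤ n * ‖r‖ := by
  rw [affineIter_tdKernel, sumElim_vecMul_maskM_mul]
  calc _ ≤ Fintype.card (Fin n) * ‖(γ • P) ^ l *ᵥ r‖ :=
        norm_vecMul_le_of_abs_le_one (fun i q => hT (Sum.inl i) q) _
    _ ≤ n * (γ ^ l * ‖r‖) := by
        rw [Fintype.card_fin]
        gcongr
        exact norm_smul_pow_mulVec_le_of_mem_rowStochastic hP.mem_rowStochastic hγ0 l r
    _ ≤ n * ‖r‖ := by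
        gcongr
        exact mul_le_of_le_one_left (norm_nonneg r) (pow_le_one₀ hγ0 hγ1)

lemma abs_gvec_le {n : ℕ} {γ : ℝ} {P : Matrix (Fin n) (Fin n) ℝ} (hP : RowStochastic P)
    (hγ0 : 0 ≤ γ) (hγ1 : γ < 1) (r : Fin n → ℝ) (L : ℕ) (j : Fin n)
    (idx : (TwoN n × TwoN n) ⊕ TwoN n) :
    |gvec γ P r L j idx| ≤ L * (1 + (2 + n * ‖r‖) / (1 - γ) + n * ‖r‖) := by
  set F := featureMat γ P j
  have hF := hP.abs_featureMat_le_one hγ0 hγ1.le j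
  obtain ⟨E, e, hE, he, hg⟩ : ∃ E e, (∀ p q, |(Fᵀ * E * F) p q| ≤ 1) ∧ ‖e () ᵥ* F‖ ≤ 1 ∧
      gvec γ P r L j idx = deriv (fun t : ℝ => tfOut γ P r j (Atd n + t • E) (t • e) L) 0 := by
    rcases idx with ⟨a, b⟩ | k
    · refine ⟨single a b 1, 0, fun p q => ?_, ?_, by simp [gvec]⟩
      · simpa [mul_apply, single_apply, ite_and, abs_mul] using
          mul_le_one₀ (hF a p) (abs_nonneg _) (hF b q)
      · rw [show (0 : Matrix Unit (TwoN n) ℝ) () = 0 from rfl, zero_vecMul, norm_zero]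
        exact zero_le_one
    · refine ⟨0, single () k 1, by simp, ?_, by simp [gvec]⟩
      have hk : single () k (1 : ℝ) () = Pi.single k 1 := by
        ext; simp [single_apply, Pi.single_apply, eq_comm]
      rw [hk, single_one_vecMul]
      exact (pi_norm_le_iff_of_nonneg zero_le_one).2 fun q => hF k q
  rw [hg, (hasDerivAt_tfOut_Atd_add γ P r j E e L).deriv, abs_neg]
  exact abs_tangentIter_tdKernel_inr_le hP hγ0 hγ1 he
    (norm_affineIter_tdKernel_vecMul_maskM_mul_le hP hγ0 hγ1.le r j hE) L

lemma norm_tdUpdate_le {n : ℕ} {γ : ℝ} {P : Matrix (Fin n) (Fin n) ℝ} (hP : RowStochastic P)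
    (hγ0 : 0 ≤ γ) (hγ1 : γ < 1) {r : Fin n → ℝ} {R : ℝ} (hr : ‖r‖ ≤ R) {ρ : Fin n → ℝ}
    (hρ0 : ∀ ω, 0 ≤ ρ ω) (hρ1 : ∑ ω, ρ ω = 1) (L : ℕ) :
    ‖∑ ω, (ρ ω * ∑ j, P ω j * (r ω + γ * tfTD γ P r j L - tfTD γ P r ω L)) • gvec γ P r L ω‖
      ≤ L * γ ^ L * (R * (1 + (2 + n * R) / (1 - γ) + n * R)) := by
  have hR : 0 ≤ R := (norm_nonneg r).trans hr
  set K := 1 + (2 + n * R) / (1 - γ) + n * R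
  have hgrad : ∀ ω, ‖gvec γ P r L ω‖ ≤ L * K := fun ω =>
    (pi_norm_le_iff_of_nonneg (by positivity)).2 fun idx =>
      (abs_gvec_le hP hγ0 hγ1 r L ω idx).trans (by simp only [K]; gcongr)
  have herr : ∀ ω, |∑ j, P ω j * (r ω + γ * tfTD γ P r j L - tfTD γ P r ω L)| ≤ γ ^ L * R := by
    intro ω
    simp_rw [tfTD_eq_tdW, sum_mul_tdError_eq γ P r hP.2]
    calc _ ≤ ‖(γ • P) ^ L *ᵥ r‖ := norm_le_pi_norm _ ω
      _ ≤ γ ^ L * ‖r‖ := norm_smul_pow_mulVec_le_of_mem_rowStochastic hP.mem_rowStochastic hγ0 L r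
      _ ≤ γ ^ L * R := by gcongr
  calc _ ≤ ∑ ω, ρ ω * (γ ^ L * R) * (L * K) := by
        refine (norm_sum_le _ _).trans (Finset.sum_le_sum fun ω _ => ?_)
        rw [norm_smul, Real.norm_eq_abs, abs_mul, abs_of_nonneg (hρ0 ω)]
        exact mul_le_mul (mul_le_mul_of_nonneg_left (herr ω) (hρ0 ω)) (hgrad ω) (norm_nonneg _)
          (mul_nonneg (hρ0 ω) (by positivity))
    _ = L * γ ^ L * (R * K) := by rw [← Finset.sum_mul, ← Finset.sum_mul, hρ1]; ring

theorem stmt17_general (n : ℕ) (γ : ℝ) (hγ0 : 0 ≤ γ) (hγ1 : γ < 1)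
    (R : ℝ)
    (μ : MeasureTheory.Measure (Matrix (Fin n) (Fin n) ℝ × (Fin n → ℝ)))
    [MeasureTheory.IsProbabilityMeasure μ]
    (ρ : Matrix (Fin n) (Fin n) ℝ → (Fin n → ℝ))
    (hae : ∀ᵐ pr ∂μ, RowStochastic pr.1 ∧ ‖pr.2‖ ≤ R
      ∧ (∀ ω, 0 ≤ ρ pr.1 ω) ∧ (∑ ω, ρ pr.1 ω) = 1
      ∧ pr.1ᵀ.mulVec (ρ pr.1) = ρ pr.1) :
    Tendsto (fun L : ℕ => ∑ idx : (TwoN n × TwoN n) ⊕ TwoN n,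
        |(∫ pr, (∑ ω, (ρ pr.1 ω * ∑ j, pr.1 ω j *
              (pr.2 ω + γ * tfTD γ pr.1 pr.2 j L - tfTD γ pr.1 pr.2 ω L)) •
            gvec γ pr.1 pr.2 L ω) ∂μ) idx|)
      atTop (𝓝 0) := by
  refine tendsto_sum_abs_integral_of_ae_norm_le (fun L => ?_) (by
    simpa using (tendsto_self_mul_const_pow_of_lt_one hγ0 hγ1).mul_const
      (R * (1 + (2 + n * R) / (1 - γ) + n * R)))
  filter_upwards [hae] with pr ⟨hP, hr, hρ0, hρ1, _⟩
  exact norm_tdUpdate_le hP hγ0 hγ1 hr hρ0 hρ1 L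

/-- Theorem 2: the ℓ1 norm of the expected multi-task TD update of the
looped transformer evaluated at the TD parameters tends to 0 as the depth L → ∞. -/
theorem stmt17 (n : ℕ) (hn : 1 ≤ n) (γ : ℝ) (hγ0 : 0 ≤ γ) (hγ1 : γ < 1)
    (R : ℝ) (hR : 0 < R)
    (μ : MeasureTheory.Measure (Matrix (Fin n) (Fin n) ℝ × (Fin n → ℝ)))
    [MeasureTheory.IsProbabilityMeasure μ]
    (ρ : Matrix (Fin n) (Fin n) ℝ → (Fin n → ℝ)) (hρmeas : Measurable ρ)
    (hae : ∀ᵐ pr ∂μ, RowStochastic pr.1 ∧ ‖pr.2‖ ≤ R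
      ∧ (∀ ω, 0 ≤ ρ pr.1 ω) ∧ (∑ ω, ρ pr.1 ω) = 1
      ∧ pr.1ᵀ.mulVec (ρ pr.1) = ρ pr.1) :
    Tendsto (fun L : ℕ => ∑ idx : (TwoN n × TwoN n) ⊕ TwoN n,
        |(∫ pr, (∑ ω, (ρ pr.1 ω * ∑ j, pr.1 ω j *
              (pr.2 ω + γ * tfTD γ pr.1 pr.2 j L - tfTD γ pr.1 pr.2 ω L)) •
            gvec γ pr.1 pr.2 L ω) ∂μ) idx|)
      atTop (𝓝 0) :=
  stmt17_general n γ hγ0 hγ1 R μ ρ hae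

end
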